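/- Let c ≥ 1, 0 < ε < 1, 0 < δ < 1, and σ ≥ sqrt(8 * log(1.25/δ)) / ε. Let u, v ∈ ℝ^c be two count vectors with Euclidean distance ‖u − v‖₂ ≤ sqrt(2). Then for every measurable function F : ℝ^c → Fin c (e.g., any measurable tie-breaking argmax) and every class j ∈ Fin c, the probability under Z ~ N(0, σ²I_c) that F(u + Z) = j is at most exp(ε) times the probability that F(v + Z) = j, plus δ. In particular the GNMax aggregator, which outputs argmax_j(n_j + Gaussian noise), satisfies (ε,δ)-differential privacy whenever σ ≥ sqrt(8 log(1.25/δ))/ε. -/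

import Mathlib

open MeasureTheory ProbabilityTheory

/-- The isotropic Gaussian measure `N(m, σ²·I_d)` on `ℝ^d` (Euclidean space), defined as the
product of one-dimensional real Gaussian measures `gaussianReal (m i) σ²`. -/
noncomputable def isoGaussian (d : ℕ) (m : EuclideanSpace ℝ (Fin d)) (σ : ℝ) :
    Measure (EuclideanSpace ℝ (Fin d)) :=
  (Measure.pi (fun i => gaussianReal (m i) ((σ ^ 2).toNNReal))).map
    (MeasurableEquiv.toLp 2 (Fin d → ℝ))

/-!
Write `w = u - v`. The densities of `N(0, σ²I)` at `x` and at `x + w` differ by the factor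
`exp ℓ(x)`, where the privacy loss `ℓ(x) = (2⟪w, x⟫ + ‖w‖²) / (2σ²)` is an affine function of the
Gaussian variable `⟪w, x⟫ ~ N(0, σ²‖w‖²)`. On `{ℓ ≤ ε}` the probability of any event is at most
`exp ε` times that of the shifted event, and by a Chernoff bound `{ℓ > ε}` has probability at most
`exp (-(σ²ε - ‖w‖²/2)² / (2σ²‖w‖²))`, which the choice of `σ` makes at most `δ` once `‖w‖² ≤ 2`.
-/

open Real
open scoped ENNReal NNReal RealInnerProductSpace

namespace MeasureTheory

variable {α : Type*} [MeasurableSpace α]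

theorem lintegral_fin_nat_prod_eq_prod {n : ℕ} {μ : Fin n → Measure α} [∀ i, SigmaFinite (μ i)]
    {f : Fin n → α → ℝ≥0∞} (hf : ∀ i, Measurable (f i)) :
    ∫⁻ x, ∏ i, f i (x i) ∂Measure.pi μ = ∏ i, ∫⁻ x, f i x ∂μ i := by
  induction n with
  | zero => simp
  | succ n ih =>
      calc
        _ = ∫⁻ x : α × (Fin n → α), f 0 x.1 * ∏ i : Fin n, f i.succ (x.2 i)
            ∂(μ 0).prod (Measure.pi fun i ↦ μ i.succ) := by
          rw [← (measurePreserving_piFinSuccAbove μ 0).symm.lintegral_comp_emb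
            (MeasurableEquiv.measurableEmbedding _)]
          simp_rw [MeasurableEquiv.piFinSuccAbove_symm_apply, Fin.insertNthEquiv,
            Fin.prod_univ_succ, Fin.insertNth_zero, Equiv.coe_fn_mk, Fin.cons_succ,
            Fin.zero_succAbove, cast_eq, Fin.cons_zero]
        _ = (∫⁻ x, f 0 x ∂μ 0) * ∏ i : Fin n, ∫⁻ x, f i.succ x ∂μ i.succ := by
          rw [← ih fun i ↦ hf _]
          exact lintegral_prod_mul (hf 0).aemeasurable (Finset.measurable_prod _
            fun (i : Fin n) _ ↦ (hf i.succ).comp (measurable_pi_apply i)).aemeasurable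
        _ = ∏ i, ∫⁻ x, f i x ∂μ i := by rw [Fin.prod_univ_succ]

theorem Measure.pi_withDensity {n : ℕ} {μ : Fin n → Measure α} [∀ i, SigmaFinite (μ i)]
    {f : Fin n → α → ℝ≥0∞} (hf : ∀ i, Measurable (f i))
    [∀ i, SigmaFinite ((μ i).withDensity (f i))] :
    Measure.pi (fun i ↦ (μ i).withDensity (f i))
      = (Measure.pi μ).withDensity (fun x ↦ ∏ i, f i (x i)) := by
  refine Measure.pi_eq fun s hs ↦ ?_
  have hbox : (Set.univ.pi s).indicator (fun x ↦ ∏ i, f i (x i))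
      = fun x ↦ ∏ i, (s i).indicator (f i) (x i) := by
    ext x
    by_cases hx : x ∈ Set.univ.pi s
    · simp_all [Set.indicator_of_mem]
    · rw [Set.indicator_of_notMem hx]
      simp only [Set.mem_pi, Set.mem_univ, true_implies, not_forall] at hx
      obtain ⟨i, hi⟩ := hx
      exact (Finset.prod_eq_zero (Finset.mem_univ i) (Set.indicator_of_notMem hi _)).symm
  rw [withDensity_apply _ (.univ_pi hs), ← lintegral_indicator (.univ_pi hs), hbox,
    lintegral_fin_nat_prod_eq_prod fun i ↦ (hf i).indicator (hs i)]
  simp_rw [lintegral_indicator (hs _), withDensity_apply _ (hs _)]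

theorem withDensity_preimage_add_right_le {G : Type*} [MeasurableSpace G] [AddGroup G]
    [MeasurableAdd G] (μ : Measure G) [μ.IsAddRightInvariant] {f : G → ℝ≥0∞}
    (hf : Measurable f) (w : G) (a : ℝ≥0∞) {s : Set G} (hs : MeasurableSet s) :
    μ.withDensity f ((· + w) ⁻¹' s)
      ≤ a * μ.withDensity f s + μ.withDensity f {x | a * f (x + w) < f x} := by
  set t := {x | f x ≤ a * f (x + w)}
  have ht : MeasurableSet t := measurableSet_le hf ((hf.comp (measurable_add_const w)).const_mul a)
  have hs' : MeasurableSet ((· + w) ⁻¹' s) := measurable_add_const w hs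
  have hbad : (· + w) ⁻¹' s \ t ⊆ {x | a * f (x + w) < f x} := fun x hx ↦ by
    simpa [t] using hx.2
  have hgood : μ.withDensity f ((· + w) ⁻¹' s ∩ t) ≤ a * μ.withDensity f s :=
    calc μ.withDensity f ((· + w) ⁻¹' s ∩ t)
        = ∫⁻ x in (· + w) ⁻¹' s ∩ t, f x ∂μ := withDensity_apply _ (hs'.inter ht)
      _ ≤ ∫⁻ x in (· + w) ⁻¹' s, a * f (x + w) ∂μ :=
        (setLIntegral_mono ((hf.comp (measurable_add_const w)).const_mul a) fun x hx ↦ hx.2).trans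
          (lintegral_mono_set Set.inter_subset_left)
      _ = a * ∫⁻ x in s, f x ∂μ := by
        rw [lintegral_const_mul _ (by fun_prop : Measurable fun x ↦ f (x + w)),
          (measurePreserving_add_right μ w).setLIntegral_comp_preimage hs hf]
      _ = a * μ.withDensity f s := by rw [withDensity_apply _ hs]
  calc μ.withDensity f ((· + w) ⁻¹' s)
      ≤ μ.withDensity f ((· + w) ⁻¹' s ∩ t) + μ.withDensity f ((· + w) ⁻¹' s \ t) :=
        measure_le_inter_add_sdiff _ _ _
    _ ≤ _ := add_le_add hgood (measure_mono hbad)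

end MeasureTheory

theorem gaussianReal_ge_le_exp (v : ℝ≥0) {a : ℝ} (ha : 0 ≤ a) :
    gaussianReal 0 v {x | a ≤ x} ≤ ENNReal.ofReal (exp (-a ^ 2 / (2 * v))) := by
  have hchernoff := measure_ge_le_exp_mul_mgf (X := id) (μ := gaussianReal 0 v) a
    (div_nonneg ha v.2) (integrable_exp_mul_gaussianReal _)
  have hexp : -(a / v) * a + (0 * (a / v) + v * (a / v) ^ 2 / 2) = -a ^ 2 / (2 * v) := by
    rcases eq_or_ne (v : ℝ) 0 with hv | hv
    · simp [hv]
    · field_simp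
      ring
  rw [← ofReal_measureReal]
  refine ENNReal.ofReal_le_ofReal (hchernoff.trans_eq ?_)
  rw [mgf_id_gaussianReal, ← exp_add]
  exact congrArg rexp hexp

theorem isoGaussian_eq_withDensity (d : ℕ) (m : EuclideanSpace ℝ (Fin d)) {σ : ℝ} (hσ : σ ≠ 0) :
    isoGaussian d m σ = volume.withDensity fun x ↦
      ENNReal.ofReal ((√(2 * π * σ ^ 2))⁻¹ ^ d * exp (-‖x - m‖ ^ 2 / (2 * σ ^ 2))) := by
  have hV : (σ ^ 2).toNNReal ≠ 0 := by simpa using hσ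
  have hpdf (x : Fin d → ℝ) : ∏ i, gaussianPDF (m i) (σ ^ 2).toNNReal (x i)
      = ENNReal.ofReal ((√(2 * π * σ ^ 2))⁻¹ ^ d
          * exp (-‖WithLp.toLp 2 x - m‖ ^ 2 / (2 * σ ^ 2))) := by
    simp_rw [gaussianPDF, ← ENNReal.ofReal_prod_of_nonneg fun i _ ↦ gaussianPDFReal_nonneg _ _ _,
      gaussianPDFReal, Finset.prod_mul_distrib, ← exp_sum, EuclideanSpace.real_norm_sq_eq,
      Real.coe_toNNReal _ (sq_nonneg σ), Finset.prod_const, Finset.card_univ, Fintype.card_fin,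
      neg_div, Finset.sum_div, Finset.sum_neg_distrib]
    rfl
  have (i : Fin d) : SigmaFinite (volume.withDensity (gaussianPDF (m i) (σ ^ 2).toNNReal)) := by
    rw [← gaussianReal_of_var_ne_zero _ hV]; infer_instance
  simp_rw [isoGaussian, gaussianReal_of_var_ne_zero _ hV,
    Measure.pi_withDensity fun i ↦ measurable_gaussianPDF _ _]
  ext s hs
  rw [Measure.map_apply (MeasurableEquiv.measurable _) hs, withDensity_apply _ hs,
    withDensity_apply _ (MeasurableEquiv.measurable _ hs), ← volume_pi,
    ← (PiLp.volume_preserving_toLp (Fin d)).setLIntegral_comp_preimage hs (by fun_prop)]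
  simp_rw [hpdf]
  rfl

theorem isoGaussian_preimage_add_right_le (d : ℕ) {σ : ℝ} (hσ : σ ≠ 0)
    (w : EuclideanSpace ℝ (Fin d)) (ε : ℝ) {s : Set (EuclideanSpace ℝ (Fin d))}
    (hs : MeasurableSet s) :
    isoGaussian d 0 σ ((· + w) ⁻¹' s) ≤ ENNReal.ofReal (exp ε) * isoGaussian d 0 σ s
      + isoGaussian d 0 σ {x | σ ^ 2 * ε - ‖w‖ ^ 2 / 2 ≤ ⟪w, x⟫} := by
  rw [isoGaussian_eq_withDensity d 0 hσ]
  refine (withDensity_preimage_add_right_le _ (by fun_prop) w _ hs).trans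
    (add_le_add_right (measure_mono fun x hx ↦ ?_) _)
  have hσ2 : 0 < 2 * σ ^ 2 := by positivity
  have hC : 0 < (√(2 * π * σ ^ 2))⁻¹ ^ d := by positivity
  simp only [sub_zero, Set.mem_ofPred_eq] at hx ⊢
  rw [← ENNReal.ofReal_mul (exp_pos ε).le, ENNReal.ofReal_lt_ofReal_iff (by positivity),
    mul_left_comm, mul_lt_mul_iff_right₀ hC, ← exp_add, exp_lt_exp, lt_div_iff₀ hσ2,
    add_mul, div_mul_cancel₀ _ hσ2.ne', norm_add_sq_real, real_inner_comm] at hx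
  linarith

theorem isoGaussian_zero_eq_map_smul_stdGaussian (d : ℕ) (σ : ℝ) :
    isoGaussian d 0 σ = (stdGaussian (EuclideanSpace ℝ (Fin d))).map (σ • ·) := by
  have hscale : gaussianReal 0 (σ ^ 2).toNNReal = (gaussianReal 0 1).map (σ * ·) := by
    rw [gaussianReal_map_const_mul, mul_zero, mul_one]
    congr
    ext
    simp [sq_nonneg]
  rw [← map_pi_eq_stdGaussian, Measure.map_map (by fun_prop) (by fun_prop), isoGaussian]
  simp_rw [PiLp.zero_apply, hscale]
  rw [← Measure.pi_map_pi fun _ ↦ by fun_prop, Measure.map_map (by fun_prop) (by fun_prop)]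
  rfl

theorem isoGaussian_map_inner (d : ℕ) (σ : ℝ) (w : EuclideanSpace ℝ (Fin d)) :
    (isoGaussian d 0 σ).map (⟪w, ·⟫) = gaussianReal 0 (σ ^ 2 * ‖w‖ ^ 2).toNNReal := by
  have hL : (⟪w, ·⟫) ∘ (σ • ·) = ⇑(σ • innerSL ℝ w) := by
    ext x
    simp [inner_smul_right]
  rw [isoGaussian_zero_eq_map_smul_stdGaussian, Measure.map_map (by fun_prop) (by fun_prop), hL,
    IsGaussian.map_eq_gaussianReal, integral_strongDual_stdGaussian, variance_dual_stdGaussian,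
    norm_smul, innerSL_apply_norm, mul_pow, Real.norm_eq_abs, sq_abs]

theorem isoGaussian_inner_ge_le_exp (d : ℕ) (σ : ℝ) (w : EuclideanSpace ℝ (Fin d)) {a : ℝ}
    (ha : 0 ≤ a) :
    isoGaussian d 0 σ {x | a ≤ ⟪w, x⟫}
      ≤ ENNReal.ofReal (exp (-a ^ 2 / (2 * (σ ^ 2 * ‖w‖ ^ 2)))) := by
  have hset : {x | a ≤ ⟪w, x⟫} = (⟪w, ·⟫) ⁻¹' Set.Ici a := rfl
  rw [hset, ← Measure.map_apply (by fun_prop) measurableSet_Ici, isoGaussian_map_inner]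
  have htail := gaussianReal_ge_le_exp (σ ^ 2 * ‖w‖ ^ 2).toNNReal ha
  rwa [Real.coe_toNNReal _ (by positivity)] at htail

theorem gaussianMechanism_calibration {ε δ σ W : ℝ} (hε : 0 < ε) (hε1 : ε < 1) (hδ : 0 < δ)
    (hδ1 : δ < 1) (hW0 : 0 < W) (hW : W ≤ 2) (hσ : 8 * log (1.25 / δ) ≤ σ ^ 2 * ε ^ 2) :
    0 ≤ σ ^ 2 * ε - W / 2 ∧ exp (-(σ ^ 2 * ε - W / 2) ^ 2 / (2 * (σ ^ 2 * W))) ≤ δ := by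
  set L := log δ⁻¹
  have hL : 0 < L := log_pos (one_lt_inv₀ hδ |>.2 hδ1)
  have hlog : 1 / 5 ≤ log 1.25 := by
    have := one_sub_inv_le_log_of_pos (by norm_num : (0 : ℝ) < 1.25)
    norm_num at this ⊢
    linarith
  have hsplit : log (1.25 / δ) = log 1.25 + L := by
    rw [div_eq_mul_inv, log_mul (by norm_num) (inv_ne_zero hδ.ne')]
  have hσL : 8 / 5 + 8 * L ≤ σ ^ 2 * ε ^ 2 := by linarith
  have hσ2 : 0 < σ ^ 2 := by nlinarith
  have hεσ : σ ^ 2 * ε ^ 2 ≤ σ ^ 2 * ε := by nlinarith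
  refine ⟨by linarith, ?_⟩
  -- With `t = σ²ε`: `4σ²L ≤ t²/2 - 4t/5 ≤ (t - 1)²`, the gap being `((t - 6/5)² + 14/25) / 2`.
  have hkey : 2 * (σ ^ 2 * W) * L ≤ (σ ^ 2 * ε - W / 2) ^ 2 := by
    have hWL : 2 * (σ ^ 2 * W) * L ≤ 4 * σ ^ 2 * L := by
      nlinarith [mul_nonneg (mul_nonneg (sub_nonneg.2 hW) hσ2.le) hL.le]
    have hLt : 4 * σ ^ 2 * L ≤ (σ ^ 2 * ε) ^ 2 / 2 - 4 * (σ ^ 2 * ε) / 5 := by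
      nlinarith [mul_le_mul_of_nonneg_left hσL hσ2.le, mul_le_mul_of_nonneg_left hε1.le hσ2.le]
    nlinarith [sq_nonneg (σ ^ 2 * ε - 6 / 5)]
  rw [← exp_log hδ, exp_le_exp, neg_div, neg_le, ← log_inv, le_div_iff₀ (by positivity)]
  linarith

theorem gnmax_dp_general (c : ℕ) (ε δ σ : ℝ)
    (hε : 0 < ε) (hε1 : ε < 1) (hδ : 0 < δ) (hδ1 : δ < 1)
    (hσ : Real.sqrt (8 * Real.log (1.25 / δ)) / ε ≤ σ)
    (u v : EuclideanSpace ℝ (Fin c)) (huv : ‖u - v‖ ≤ Real.sqrt 2)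
    (F : EuclideanSpace ℝ (Fin c) → Fin c) (hF : Measurable F) (j : Fin c) :
    isoGaussian c 0 σ {z | F (u + z) = j}
      ≤ ENNReal.ofReal (Real.exp ε) * isoGaussian c 0 σ {z | F (v + z) = j}
        + ENNReal.ofReal δ := by
  obtain rfl | hne := eq_or_ne u v
  · exact le_add_right (le_mul_of_one_le_left' (ENNReal.one_le_ofReal.2 (one_le_exp hε.le)))
  have hσ2 : 8 * log (1.25 / δ) ≤ σ ^ 2 * ε ^ 2 := by
    rw [div_le_iff₀ hε, sqrt_le_iff, mul_pow] at hσ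
    exact hσ.2
  have hσ0 : σ ≠ 0 := by
    rintro rfl
    nlinarith [log_pos ((one_lt_div hδ).2 (by linarith : δ < 1.25))]
  have hW : ‖u - v‖ ^ 2 ≤ 2 := by
    simpa using pow_le_pow_left₀ (norm_nonneg _) huv 2
  obtain ⟨hb, htail⟩ := gaussianMechanism_calibration hε hε1 hδ hδ1
    (pow_pos (norm_pos_iff.2 (sub_ne_zero.2 hne)) 2) hW hσ2
  have hpre : {z | F (u + z) = j} = (· + (u - v)) ⁻¹' {z | F (v + z) = j} := by
    ext z
    have hshift : v + (z + (u - v)) = u + z := by abel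
    simp [hshift]
  calc isoGaussian c 0 σ {z | F (u + z) = j}
      ≤ ENNReal.ofReal (exp ε) * isoGaussian c 0 σ {z | F (v + z) = j}
        + isoGaussian c 0 σ {x | σ ^ 2 * ε - ‖u - v‖ ^ 2 / 2 ≤ ⟪u - v, x⟫} :=
      hpre ▸ isoGaussian_preimage_add_right_le c hσ0 (u - v) ε
        (hF.comp (measurable_const_add v) (measurableSet_singleton j))
    _ ≤ ENNReal.ofReal (exp ε) * isoGaussian c 0 σ {z | F (v + z) = j} + ENNReal.ofReal δ := by
      gcongr
      exact (isoGaussian_inner_ge_le_exp c σ (u - v) hb).trans (ENNReal.ofReal_le_ofReal htail)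

/-- **DP of the GNMax aggregator.** Let `σ ≥ √(8 log(1.25/δ))/ε` and let `u, v` be two count
vectors with `‖u − v‖₂ ≤ √2`. Then for every measurable post-processing `F : ℝ^c → Fin c`
(e.g., a measurable argmax with tie-breaking) and every class `j`, the probability under
`Z ~ N(0, σ²I_c)` that `F(u + Z) = j` is at most `e^ε` times that for `v`, plus `δ`. -/
theorem gnmax_dp (c : ℕ) (hc : 1 ≤ c) (ε δ σ : ℝ)
    (hε : 0 < ε) (hε1 : ε < 1) (hδ : 0 < δ) (hδ1 : δ < 1)
    (hσ : Real.sqrt (8 * Real.log (1.25 / δ)) / ε ≤ σ)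
    (u v : EuclideanSpace ℝ (Fin c)) (huv : ‖u - v‖ ≤ Real.sqrt 2)
    (F : EuclideanSpace ℝ (Fin c) → Fin c) (hF : Measurable F) (j : Fin c) :
    isoGaussian c 0 σ {z | F (u + z) = j}
      ≤ ENNReal.ofReal (Real.exp ε) * isoGaussian c 0 σ {z | F (v + z) = j}
        + ENNReal.ofReal δ :=
  gnmax_dp_general c ε δ σ hε hε1 hδ hδ1 hσ u v huv F hF j
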